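/- Let D be a Young diagram, p, q coprime positive integers, K a positive integer, P = Kp, Q = Kq, such that every box (x,y) of D satisfies qx + py \leq Kpq - p - q. Fix non-negative integers a, l with p·l \geq q·(a+1). If (a, Q-1-l) \in R_{P,Q} \ D, then the number of boxes c \in D with a(c) = a and l(c) = l is one less than the number of boxes in R_{P,Q} \ D with arm a and leg l, where R_{P,Q} = {0,...,P-1} \times {0,...,Q-1}. -/

import Mathlib

/-- A Young diagram: a finite down-closed subset of ℕ². -/
def IsYoung (D : Finset (ℕ × ℕ)) : Prop :=
  ∀ x y x' y', (x, y) ∈ D → x' ≤ x → y' ≤ y → (x', y') ∈ D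

/-- Arm length of a box inside the diagram. -/
def arm (D : Finset (ℕ × ℕ)) (c : ℕ × ℕ) : ℕ :=
  (D.filter fun d => d.2 = c.2 ∧ c.1 < d.1).card

/-- Leg length of a box inside the diagram. -/
def leg (D : Finset (ℕ × ℕ)) (c : ℕ × ℕ) : ℕ :=
  (D.filter fun d => d.1 = c.1 ∧ c.2 < d.2).card

/-- Arm length of a box in the complement of the diagram. -/
def coArm (D : Finset (ℕ × ℕ)) (c : ℕ × ℕ) : ℕ :=
  ((Finset.range c.1).filter fun x' => (x', c.2) ∉ D).card

/-- Leg length of a box in the complement of the diagram. -/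
def coLeg (D : Finset (ℕ × ℕ)) (c : ℕ × ℕ) : ℕ :=
  ((Finset.range c.2).filter fun y' => (c.1, y') ∉ D).card

/-!
Work with the Young diagram `μ` whose cells are `D`, in Mathlib's (row, column) convention: the
paper's box `(x, y)` is the cell in row `x` and column `y`. Walking along the boundary of `μ`, put
the edge ending row `i` at position `rowLen i - i ∈ ℤ` and the edge ending column `j` at
`j + 1 - colLen j`; these positions partition `ℤ` (the Maya diagram of `μ`). With `m = a + l + 1`,
a cell outside `μ` with coarm `a` and coleg `l` is a row edge at some `k` and a column edge at
`k + m` with `a + 1` row edges in `[k, k + m)`; a cell of `μ` with arm `a` and leg `l` is the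
reverse pattern, with `a + 1` row edges in `(k, k + m]`. So the former are the places where the
number of row edges in a sliding window of length `m` falls from `a + 1` to `a`, the latter where
it rises back. This count is `m` far to the left and `0` far to the right, so there is exactly one
more fall than rise. Outside cells with coarm `a` and coleg `l` leave the rectangle only through the
extreme ones `(colLen l + a, l)` and `(a, rowLen a + l)`, which the slope condition and
`(a, Q - 1 - l) ∉ D` keep inside.
-/

open Finset

theorem card_falls_sub_card_rises_Ico (b : ℤ → Prop) [DecidablePred b]
    {lo hi : ℤ} (h : lo ≤ hi) :
    (#{i ∈ Ico lo hi | b i ∧ ¬b (i + 1)} : ℤ) - #{i ∈ Ico lo hi | ¬b i ∧ b (i + 1)}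
      = (if b lo then 1 else 0) - (if b hi then 1 else 0) := by
  induction hi, h using Int.leInduction with
  | base => simp
  | succ hi hlo ih =>
    rw [← insert_Ico_right_eq_Ico_add_one hlo, filter_insert, filter_insert]
    have hnot : hi ∉ Ico lo hi := by simp
    by_cases h₁ : b hi <;> by_cases h₂ : b (hi + 1) <;>
      simp only [h₁, h₂, ↓reduceIte, sub_zero, not_true_eq_false, not_false_eq_true, and_self,
        and_true, and_false, mem_filter, hnot, card_insert_of_notMem, Nat.cast_add, Nat.cast_one]
        at ih ⊢ <;> omega

theorem card_falls_eq_card_rises_add_one (b : ℤ → Prop) {lo hi : ℤ}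
    (hlo : ∀ i ≤ lo, b i) (hhi : ∀ i, hi ≤ i → ¬b i) {S T : Finset ℤ}
    (hS : ∀ i, i ∈ S ↔ b i ∧ ¬b (i + 1)) (hT : ∀ i, i ∈ T ↔ ¬b i ∧ b (i + 1)) :
    #S = #T + 1 := by
  classical
  have hle : lo ≤ hi := by
    by_contra! h
    exact hhi lo h.le (hlo lo le_rfl)
  have hbounds : ∀ i, (b i ∧ ¬b (i + 1) ∨ ¬b i ∧ b (i + 1)) → i ∈ Ico lo hi := by
    intro i hi'
    rw [mem_Ico]
    constructor
    · by_contra! h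
      have := hlo i h.le
      have := hlo (i + 1) (by omega)
      tauto
    · by_contra! h
      have := hhi i h
      have := hhi (i + 1) (by omega)
      tauto
  have hS' : S = {i ∈ Ico lo hi | b i ∧ ¬b (i + 1)} := by
    ext i; rw [mem_filter, hS]; exact ⟨fun h => ⟨hbounds i (.inl h), h⟩, And.right⟩
  have hT' : T = {i ∈ Ico lo hi | ¬b i ∧ b (i + 1)} := by
    ext i; rw [mem_filter, hT]; exact ⟨fun h => ⟨hbounds i (.inr h), h⟩, And.right⟩
  have := card_falls_sub_card_rises_Ico b hle
  rw [if_pos (hlo lo le_rfl), if_neg (hhi hi le_rfl), ← hS', ← hT'] at this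
  omega

theorem IsYoung.isLowerSet {D : Finset (ℕ × ℕ)} (hD : IsYoung D) :
    IsLowerSet (D : Set (ℕ × ℕ)) :=
  fun c d hdc hc => hD c.1 c.2 d.1 d.2 hc hdc.1 hdc.2

namespace YoungDiagram

variable (μ : YoungDiagram)

theorem arm_cells (c : ℕ × ℕ) : arm μ.cells c = μ.colLen c.2 - c.1 - 1 := by
  have : {d ∈ μ.cells | d.2 = c.2 ∧ c.1 < d.1} = Ioo c.1 (μ.colLen c.2) ×ˢ {c.2} := by
    ext ⟨i, j⟩
    simp only [mem_filter, mem_cells, mem_product, mem_Ioo, mem_singleton]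
    constructor
    · rintro ⟨h, rfl, hi⟩; exact ⟨⟨hi, mem_iff_lt_colLen.1 h⟩, rfl⟩
    · rintro ⟨⟨hi, h⟩, rfl⟩; exact ⟨mem_iff_lt_colLen.2 h, rfl, hi⟩
  rw [arm, this, card_product, Nat.card_Ioo, card_singleton, mul_one]

theorem leg_cells (c : ℕ × ℕ) : leg μ.cells c = μ.rowLen c.1 - c.2 - 1 := by
  have : {d ∈ μ.cells | d.1 = c.1 ∧ c.2 < d.2} = {c.1} ×ˢ Ioo c.2 (μ.rowLen c.1) := by
    ext ⟨i, j⟩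
    simp only [mem_filter, mem_cells, mem_product, mem_Ioo, mem_singleton]
    constructor
    · rintro ⟨h, rfl, hj⟩; exact ⟨rfl, hj, mem_iff_lt_rowLen.1 h⟩
    · rintro ⟨rfl, hj, h⟩; exact ⟨mem_iff_lt_rowLen.2 h, rfl, hj⟩
  rw [leg, this, card_product, Nat.card_Ioo, card_singleton, one_mul]

theorem coArm_cells (c : ℕ × ℕ) : coArm μ.cells c = c.1 - μ.colLen c.2 := by
  have : {i ∈ range c.1 | (i, c.2) ∉ μ.cells} = Ico (μ.colLen c.2) c.1 := by
    ext i
    simp only [mem_filter, mem_range, mem_cells, mem_iff_lt_colLen, mem_Ico]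
    omega
  rw [coArm, this, Nat.card_Ico]

theorem coLeg_cells (c : ℕ × ℕ) : coLeg μ.cells c = c.2 - μ.rowLen c.1 := by
  have : {j ∈ range c.2 | (c.1, j) ∉ μ.cells} = Ico (μ.rowLen c.1) c.2 := by
    ext j
    simp only [mem_filter, mem_range, mem_cells, mem_iff_lt_rowLen, mem_Ico]
    omega
  rw [coLeg, this, Nat.card_Ico]

theorem mem_and_arm_and_leg_iff {c : ℕ × ℕ} {a l : ℕ} :
    c ∈ μ.cells ∧ arm μ.cells c = a ∧ leg μ.cells c = l ↔
      μ.colLen c.2 = c.1 + a + 1 ∧ μ.rowLen c.1 = c.2 + l + 1 := by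
  have h₁ : c ∈ μ ↔ c.1 < μ.colLen c.2 := mem_iff_lt_colLen
  have h₂ : c ∈ μ ↔ c.2 < μ.rowLen c.1 := mem_iff_lt_rowLen
  rw [arm_cells, leg_cells, mem_cells]
  constructor
  · rintro ⟨hc, rfl, rfl⟩
    have := h₁.1 hc
    have := h₂.1 hc
    omega
  · rintro ⟨ha, hl⟩
    exact ⟨h₁.2 (by omega), by omega, by omega⟩

theorem notMem_and_coArm_and_coLeg_iff {c : ℕ × ℕ} {a l : ℕ} :
    c ∉ μ.cells ∧ coArm μ.cells c = a ∧ coLeg μ.cells c = l ↔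
      c.1 = μ.colLen c.2 + a ∧ c.2 = μ.rowLen c.1 + l := by
  have h₁ : c ∈ μ ↔ c.1 < μ.colLen c.2 := mem_iff_lt_colLen
  have h₂ : c ∈ μ ↔ c.2 < μ.rowLen c.1 := mem_iff_lt_rowLen
  rw [coArm_cells, coLeg_cells, mem_cells]
  constructor
  · rintro ⟨hc, rfl, rfl⟩
    have := mt h₁.2 hc
    have := mt h₂.2 hc
    omega
  · rintro ⟨ha, hl⟩
    exact ⟨mt h₁.1 (by omega), by omega, by omega⟩

def rowEdge (i : ℕ) : ℤ := μ.rowLen i - i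

def colEdge (j : ℕ) : ℤ := j + 1 - μ.colLen j

theorem rowEdge_strictAnti : StrictAnti μ.rowEdge :=
  strictAnti_nat_of_succ_lt fun i => by
    have := μ.rowLen_anti i (i + 1) i.le_succ
    simp only [rowEdge]
    omega

theorem colEdge_strictMono : StrictMono μ.colEdge :=
  strictMono_nat_of_lt_succ fun j => by
    have := μ.colLen_anti j (j + 1) j.le_succ
    simp only [colEdge]
    omega

variable {μ}

theorem rowEdge_lt_colEdge {i j : ℕ} (h : (i, j) ∉ μ) : μ.rowEdge i < μ.colEdge j := by
  have hi : μ.rowLen i ≤ j := not_lt.1 (mt mem_iff_lt_rowLen.2 h)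
  have hj : μ.colLen j ≤ i := not_lt.1 (mt mem_iff_lt_colLen.2 h)
  simp only [rowEdge, colEdge]
  omega

theorem colEdge_lt_rowEdge {i j : ℕ} (h : (i, j) ∈ μ) : μ.colEdge j < μ.rowEdge i := by
  have hi : j < μ.rowLen i := mem_iff_lt_rowLen.1 h
  have hj : i < μ.colLen j := mem_iff_lt_colLen.1 h
  simp only [rowEdge, colEdge]
  omega

variable (μ)

theorem exists_rowEdge_lt (k : ℤ) : ∃ i, μ.rowEdge i < k := by
  refine ⟨(μ.rowLen 0 - k + 1).toNat, ?_⟩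
  have := μ.rowLen_anti 0 (μ.rowLen 0 - k + 1).toNat (Nat.zero_le _)
  simp only [rowEdge]
  omega

/-- The number of rows `i` with `k ≤ rowEdge i`. -/
noncomputable def rowEdgeCount (k : ℤ) : ℕ := Nat.find (μ.exists_rowEdge_lt k)

variable {μ}

theorem lt_rowEdgeCount_iff {i : ℕ} {k : ℤ} : i < μ.rowEdgeCount k ↔ k ≤ μ.rowEdge i := by
  rw [rowEdgeCount, Nat.lt_find_iff]
  exact ⟨fun h => not_lt.1 (h i le_rfl),
    fun h i' hi' => not_lt.2 (h.trans (μ.rowEdge_strictAnti.antitone hi'))⟩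

variable (μ)

theorem rowEdgeCount_rowEdge (i : ℕ) : μ.rowEdgeCount (μ.rowEdge i) = i + 1 :=
  eq_of_forall_lt_iff fun i' => by
    rw [lt_rowEdgeCount_iff, μ.rowEdge_strictAnti.le_iff_ge, Nat.lt_succ_iff]

theorem rowEdgeCount_rowEdge_add_one (i : ℕ) : μ.rowEdgeCount (μ.rowEdge i + 1) = i :=
  eq_of_forall_lt_iff fun i' => by
    rw [lt_rowEdgeCount_iff, Int.add_one_le_iff, μ.rowEdge_strictAnti.lt_iff_gt]

theorem rowEdgeCount_colEdge (j : ℕ) : μ.rowEdgeCount (μ.colEdge j) = μ.colLen j :=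
  eq_of_forall_lt_iff fun i => by
    rw [lt_rowEdgeCount_iff, ← mem_iff_lt_colLen]
    exact ⟨fun h => by_contra fun hi => (rowEdge_lt_colEdge hi).not_ge h,
      fun h => (colEdge_lt_rowEdge h).le⟩

theorem rowEdgeCount_colEdge_add_one (j : ℕ) : μ.rowEdgeCount (μ.colEdge j + 1) = μ.colLen j :=
  eq_of_forall_lt_iff fun i => by
    rw [lt_rowEdgeCount_iff, Int.add_one_le_iff, ← mem_iff_lt_colLen]
    exact ⟨fun h => by_contra fun hi => (rowEdge_lt_colEdge hi).not_gt h, colEdge_lt_rowEdge⟩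

theorem exists_rowEdge_eq_or_colEdge_eq (k : ℤ) :
    (∃ i, μ.rowEdge i = k) ∨ ∃ j, μ.colEdge j = k := by
  obtain ⟨n, hn, hprev⟩ : ∃ n, μ.rowEdge n < k + 1 ∧ ∀ i < n, k + 1 ≤ μ.rowEdge i :=
    ⟨_, Nat.find_spec (μ.exists_rowEdge_lt (k + 1)), fun _ => lt_rowEdgeCount_iff.1⟩
  rcases (Int.lt_add_one_iff.1 hn).eq_or_lt with hk | hk
  · exact .inl ⟨n, hk⟩
  simp only [rowEdge] at hk
  have hnk : 0 ≤ k - 1 + n := by omega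
  set j := (k - 1 + n).toNat
  have hj : (j : ℤ) = k - 1 + n := Int.toNat_of_nonneg hnk
  refine .inr ⟨j, ?_⟩
  suffices μ.colLen j = n by simp only [colEdge, this]; omega
  apply le_antisymm
  · refine not_lt.1 fun h => ?_
    have := mem_iff_lt_rowLen.1 (mem_iff_lt_colLen.2 h)
    omega
  · rcases Nat.eq_zero_or_pos n with hn0 | hn0
    · omega
    have hprev := hprev (n - 1) (by omega)
    simp only [rowEdge] at hprev
    have : n - 1 < μ.colLen j := mem_iff_lt_colLen.1 (mem_iff_lt_rowLen.2 (by omega))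
    omega

theorem rowEdgeCount_step (k : ℤ) :
    (∃ i, μ.rowEdge i = k ∧ μ.rowEdgeCount k = i + 1 ∧ μ.rowEdgeCount (k + 1) = i) ∨
      ∃ j, μ.colEdge j = k ∧ μ.rowEdgeCount k = μ.colLen j ∧
        μ.rowEdgeCount (k + 1) = μ.colLen j := by
  rcases μ.exists_rowEdge_eq_or_colEdge_eq k with ⟨i, rfl⟩ | ⟨j, rfl⟩
  · exact .inl ⟨i, rfl, μ.rowEdgeCount_rowEdge i, μ.rowEdgeCount_rowEdge_add_one i⟩
  · exact .inr ⟨j, rfl, μ.rowEdgeCount_colEdge j, μ.rowEdgeCount_colEdge_add_one j⟩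

theorem rowEdgeCount_eq_zero {k : ℤ} (hk : (μ.rowLen 0 : ℤ) < k) : μ.rowEdgeCount k = 0 :=
  Nat.eq_zero_of_not_pos fun h => by
    have := lt_rowEdgeCount_iff.1 h
    simp only [rowEdge] at this
    omega

theorem rowEdgeCount_eq {k : ℤ} (hk : k ≤ -(μ.colLen 0 : ℤ)) :
    (μ.rowEdgeCount k : ℤ) = 1 - k := by
  suffices μ.rowEdgeCount k = (1 - k).toNat by omega
  refine eq_of_forall_lt_iff fun i => ?_
  rw [lt_rowEdgeCount_iff]
  constructor
  · intro h
    by_contra hi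
    have : μ.rowLen i = 0 := by
      by_contra h0
      have := mem_iff_lt_colLen.1 (mem_iff_lt_rowLen.2 (Nat.pos_of_ne_zero h0))
      omega
    simp only [rowEdge, this] at h
    omega
  · intro h
    simp only [rowEdge]
    omega

/-- The number of row edges at the positions `k, k + 1, …, k + m - 1`. -/
noncomputable def rowEdgesIn (k : ℤ) (m : ℕ) : ℕ := μ.rowEdgeCount k - μ.rowEdgeCount (k + m)

theorem rowEdgesIn_eq_self {k : ℤ} {m : ℕ} (hk : k + m ≤ -(μ.colLen 0 : ℤ)) :
    μ.rowEdgesIn k m = m := by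
  have h₁ := μ.rowEdgeCount_eq (k := k) (by omega)
  have h₂ := μ.rowEdgeCount_eq hk
  rw [rowEdgesIn]
  omega

theorem rowEdgesIn_eq_zero {k : ℤ} {m : ℕ} (hk : (μ.rowLen 0 : ℤ) < k) : μ.rowEdgesIn k m = 0 := by
  rw [rowEdgesIn, μ.rowEdgeCount_eq_zero hk]
  exact Nat.zero_sub _

theorem exists_coHook_iff {a l : ℕ} {k : ℤ} :
    (∃ c : ℕ × ℕ, c.1 = μ.colLen c.2 + a ∧ c.2 = μ.rowLen c.1 + l ∧ μ.rowEdge c.1 = k) ↔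
      a + 1 ≤ μ.rowEdgesIn k (a + l + 1) ∧ ¬a + 1 ≤ μ.rowEdgesIn (k + 1) (a + l + 1) := by
  rw [rowEdgesIn, rowEdgesIn, add_right_comm k 1]
  constructor
  · rintro ⟨⟨i, j⟩, hi, hj, rfl⟩
    dsimp only at hi hj ⊢
    have hk : μ.rowEdge i + ↑(a + l + 1) = μ.colEdge j := by
      simp only [rowEdge, colEdge]
      omega
    rw [hk, rowEdgeCount_rowEdge, rowEdgeCount_rowEdge_add_one, rowEdgeCount_colEdge,
      rowEdgeCount_colEdge_add_one]
    omega
  · rintro ⟨h₁, h₂⟩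
    rcases μ.rowEdgeCount_step k with ⟨i, hi, hc₁, hc₂⟩ | ⟨j, hj, hc₁, hc₂⟩ <;>
      rcases μ.rowEdgeCount_step (k + ↑(a + l + 1)) with
        ⟨i', hi', hd₁, hd₂⟩ | ⟨j', hj', hd₁, hd₂⟩ <;>
      rw [hc₁, hd₁] at h₁ <;> rw [hc₂, hd₂] at h₂
    · omega
    · simp only [rowEdge, colEdge] at hi hj'
      exact ⟨(i, j'), by dsimp only; omega, by dsimp only; omega, by simp only [rowEdge]; omega⟩
    · omega
    · omega

theorem exists_hook_iff {a l : ℕ} {k : ℤ} :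
    (∃ c : ℕ × ℕ, μ.colLen c.2 = c.1 + a + 1 ∧ μ.rowLen c.1 = c.2 + l + 1 ∧ μ.colEdge c.2 = k) ↔
      ¬a + 1 ≤ μ.rowEdgesIn k (a + l + 1) ∧ a + 1 ≤ μ.rowEdgesIn (k + 1) (a + l + 1) := by
  rw [rowEdgesIn, rowEdgesIn, add_right_comm k 1]
  constructor
  · rintro ⟨⟨i, j⟩, hi, hj, rfl⟩
    dsimp only at hi hj ⊢
    have hk : μ.colEdge j + ↑(a + l + 1) = μ.rowEdge i := by
      simp only [rowEdge, colEdge]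
      omega
    rw [hk, rowEdgeCount_rowEdge, rowEdgeCount_rowEdge_add_one, rowEdgeCount_colEdge,
      rowEdgeCount_colEdge_add_one]
    omega
  · rintro ⟨h₁, h₂⟩
    rcases μ.rowEdgeCount_step k with ⟨i, hi, hc₁, hc₂⟩ | ⟨j, hj, hc₁, hc₂⟩ <;>
      rcases μ.rowEdgeCount_step (k + ↑(a + l + 1)) with
        ⟨i', hi', hd₁, hd₂⟩ | ⟨j', hj', hd₁, hd₂⟩ <;>
      rw [hc₁, hd₁] at h₁ <;> rw [hc₂, hd₂] at h₂
    · omega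
    · omega
    · simp only [rowEdge, colEdge] at hj hi'
      exact ⟨(i', j), by dsimp only; omega, by dsimp only; omega, by simp only [colEdge]; omega⟩
    · omega

theorem card_filter_arm_leg_add_one (a l : ℕ) {R : Finset (ℕ × ℕ)}
    (hR : ∀ c ∉ μ.cells, coArm μ.cells c = a → coLeg μ.cells c = l → c ∈ R) :
    #{c ∈ μ.cells | arm μ.cells c = a ∧ leg μ.cells c = l} + 1 =
      #{c ∈ R | c ∉ μ.cells ∧ coArm μ.cells c = a ∧ coLeg μ.cells c = l} := by
  set hooks := {c ∈ μ.cells | arm μ.cells c = a ∧ leg μ.cells c = l}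
  set coHooks := {c ∈ R | c ∉ μ.cells ∧ coArm μ.cells c = a ∧ coLeg μ.cells c = l}
  have mem_hooks : ∀ c : ℕ × ℕ,
      c ∈ hooks ↔ μ.colLen c.2 = c.1 + a + 1 ∧ μ.rowLen c.1 = c.2 + l + 1 := fun c => by
    rw [mem_filter, ← mem_and_arm_and_leg_iff]
  have mem_coHooks : ∀ c : ℕ × ℕ,
      c ∈ coHooks ↔ c.1 = μ.colLen c.2 + a ∧ c.2 = μ.rowLen c.1 + l := fun c => by
    rw [mem_filter, ← notMem_and_coArm_and_coLeg_iff]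
    exact ⟨And.right, fun h => ⟨hR c h.1 h.2.1 h.2.2, h⟩⟩
  have inj_hooks : Set.InjOn (fun c : ℕ × ℕ => μ.colEdge c.2) hooks := by
    intro c hc c' hc' h
    have hj := μ.colEdge_strictMono.injective h
    rw [mem_coe, mem_hooks] at hc hc'
    rw [hj] at hc
    exact Prod.ext (by omega) hj
  have inj_coHooks : Set.InjOn (fun c : ℕ × ℕ => μ.rowEdge c.1) coHooks := by
    intro c hc c' hc' h
    have hi := μ.rowEdge_strictAnti.injective h
    rw [mem_coe, mem_coHooks] at hc hc'
    rw [hi] at hc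
    exact Prod.ext hi (by omega)
  rw [← card_image_of_injOn inj_hooks, ← card_image_of_injOn inj_coHooks]
  symm
  refine card_falls_eq_card_rises_add_one (fun k => a + 1 ≤ μ.rowEdgesIn k (a + l + 1))
    (lo := -μ.colLen 0 - (a + l + 1)) (hi := μ.rowLen 0 + 1) (fun k hk => ?_) (fun k hk => ?_)
    (fun k => ?_) (fun k => ?_)
  · rw [μ.rowEdgesIn_eq_self (by omega)]
    omega
  · rw [μ.rowEdgesIn_eq_zero (by omega)]
    omega
  · rw [← exists_coHook_iff]
    simp only [mem_image, mem_coHooks, and_assoc]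
  · rw [← exists_hook_iff]
    simp only [mem_image, mem_hooks, and_assoc]

theorem mem_range_prod_range_of_coArm_coLeg {P Q a l : ℕ}
    (hP : μ.colLen 0 ≤ P) (hQ : μ.rowLen 0 ≤ Q)
    (haP : μ.colLen l + a < P) (hlQ : μ.rowLen a + l < Q) {c : ℕ × ℕ} (hc : c ∉ μ.cells)
    (hca : coArm μ.cells c = a) (hcl : coLeg μ.cells c = l) : c ∈ range P ×ˢ range Q := by
  obtain ⟨hx, hy⟩ := μ.notMem_and_coArm_and_coLeg_iff.1 ⟨hc, hca, hcl⟩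
  rw [mem_product, mem_range, mem_range]
  constructor
  · by_contra! h
    have : μ.rowLen c.1 = 0 := Nat.eq_zero_of_not_pos fun h₀ => by
      have := mem_iff_lt_colLen.1 (mem_iff_lt_rowLen.2 h₀)
      omega
    rw [this, zero_add] at hy
    rw [hy] at hx
    omega
  · by_contra! h
    have : μ.colLen c.2 = 0 := Nat.eq_zero_of_not_pos fun h₀ => by
      have := mem_iff_lt_rowLen.1 (mem_iff_lt_colLen.2 h₀)
      omega
    rw [this, zero_add] at hx
    rw [hx] at hy
    omega

end YoungDiagram

theorem inside_rectangle_case_outside_general (D : Finset (ℕ × ℕ)) (hD : IsYoung D)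
    (p q K : ℕ) (hp : 0 < p) (hq : 0 < q)
    (hdiag : ∀ c ∈ D, q * c.1 + p * c.2 + p + q ≤ K * p * q)
    (a l : ℕ) (ha : a < K * p) (hl : l < K * q)
    (hslope : q * (a + 1) ≤ p * l)
    (hbox : (a, K * q - 1 - l) ∉ D) :
    (D.filter fun c => arm D c = a ∧ leg D c = l).card + 1
      = (((Finset.range (K * p)) ×ˢ (Finset.range (K * q))).filter
          fun c => c ∉ D ∧ coArm D c = a ∧ coLeg D c = l).card := by
  let μ : YoungDiagram := ⟨D, hD.isLowerSet⟩
  have hcell : ∀ i j, (i, j) ∈ μ → q * (i + 1) + p * (j + 1) ≤ q * (K * p) := fun i j h => by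
    have := hdiag (i, j) h
    dsimp only at this
    linarith
  refine μ.card_filter_arm_leg_add_one a l fun c hc hca hcl =>
    μ.mem_range_prod_range_of_coArm_coLeg ?_ ?_ ?_ ?_ hc hca hcl
  · by_contra! h
    have := hcell _ 0 (YoungDiagram.mem_iff_lt_colLen.2 h)
    nlinarith
  · by_contra! h
    have := hcell 0 _ (YoungDiagram.mem_iff_lt_rowLen.2 h)
    nlinarith
  · by_contra! h
    obtain ⟨i, hi⟩ : ∃ i, K * p = i + 1 + a := ⟨K * p - 1 - a, by omega⟩
    have := hcell i l (YoungDiagram.mem_iff_lt_colLen.2 (by omega))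
    nlinarith
  · have : ¬K * q - 1 - l < μ.rowLen a := mt YoungDiagram.mem_iff_lt_rowLen.2 hbox
    omega

theorem inside_rectangle_case_outside (D : Finset (ℕ × ℕ)) (hD : IsYoung D)
    (p q K : ℕ) (hp : 0 < p) (hq : 0 < q) (hK : 0 < K) (hpq : Nat.Coprime p q)
    (hdiag : ∀ c ∈ D, q * c.1 + p * c.2 + p + q ≤ K * p * q)
    (a l : ℕ) (ha : a < K * p) (hl : l < K * q)
    (hslope : q * (a + 1) ≤ p * l)
    (hbox : (a, K * q - 1 - l) ∉ D) :
    (D.filter fun c => arm D c = a ∧ leg D c = l).card + 1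
      = (((Finset.range (K * p)) ×ˢ (Finset.range (K * q))).filter
          fun c => c ∉ D ∧ coArm D c = a ∧ coLeg D c = l).card :=
  inside_rectangle_case_outside_general D hD p q K hp hq hdiag a l ha hl hslope hbox
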